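/- (Kernel of the differential of the end-point map.) For all γ, φ ∈ H¹(0): d_γE(φ) = 0 if and only if φ(1) = 0, ∫₀¹ ⁅φ,γ̇⁆ dt = 0, and ∫₀¹ ⁅γ,⁅φ,γ̇⁆⁆ dt = 0. -/

import Mathlib

open MeasureTheory Set intervalIntegral

noncomputable section

variable {𝕓 : Type*} [NormedAddCommGroup 𝕓] [InnerProductSpace ℝ 𝕓] [FiniteDimensional ℝ 𝕓]

/-- The space `H¹(0)` of curves `γ : [0,1] → V¹` with `γ(t) = ∫₀ᵗ γ̇(s) ds` for a
square-integrable `γ̇` with values in `V¹`.  A curve is identified with its derivative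
`γ̇ : ℝ → 𝕓`; the curve itself is recovered by `curve`. -/
def H1zero (V1 : Submodule ℝ 𝕓) : Submodule ℝ (ℝ → 𝕓) where
  carrier := {g | (∀ t, g t ∈ V1) ∧ MemLp g 2 (volume.restrict (Icc (0:ℝ) 1))}
  add_mem' := fun hg hh => ⟨fun t => V1.add_mem (hg.1 t) (hh.1 t), hg.2.add hh.2⟩
  zero_mem' := ⟨fun _ => V1.zero_mem, MemLp.zero⟩
  smul_mem' := fun c _ hg => ⟨fun t => V1.smul_mem c (hg.1 t), hg.2.const_smul c⟩

/-- The curve associated to a derivative: `γ(t) = ∫₀ᵗ γ̇(s) ds`. -/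
def curve (g : ℝ → 𝕓) (t : ℝ) : 𝕓 := ∫ s in (0:ℝ)..t, g s

variable (br : 𝕓 →ₗ[ℝ] 𝕓 →ₗ[ℝ] 𝕓)

/-- First layer of the end-point map: `F¹(γ) = γ(1)`. -/
def F1 (g : ℝ → 𝕓) : 𝕓 := curve g 1

/-- The second layer `γ²(t) = ½∫₀ᵗ ⁅γ,γ̇⁆`. -/
def curve2 (g : ℝ → 𝕓) (t : ℝ) : 𝕓 := (2:ℝ)⁻¹ • ∫ s in (0:ℝ)..t, br (curve g s) (g s)

/-- Second layer of the end-point map: `F²(γ) = ½∫₀¹ ⁅γ,γ̇⁆`. -/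
def F2 (g : ℝ → 𝕓) : 𝕓 := curve2 br g 1

/-- Third layer of the end-point map:
`F³(γ) = ∫₀¹ (½(⁅γ,γ̇²⁆ + ⁅γ²,γ̇⁆) − (1/6)⁅γ,⁅γ,γ̇⁆⁆)`, with `γ̇² = ½⁅γ,γ̇⁆`. -/
def F3 (g : ℝ → 𝕓) : 𝕓 :=
  ∫ t in (0:ℝ)..1,
    ((2:ℝ)⁻¹ • (br (curve g t) ((2:ℝ)⁻¹ • br (curve g t) (g t)) + br (curve2 br g t) (g t))
      - (6:ℝ)⁻¹ • br (curve g t) (br (curve g t) (g t)))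

/-- The end-point map `E(γ) = (F¹(γ), F²(γ), F³(γ)) ∈ V¹ ⊕ V² ⊕ V³`. -/
def Emap (g : ℝ → 𝕓) : 𝕓 × 𝕓 × 𝕓 := (F1 g, F2 br g, F3 br g)

/-- `d_γF¹(φ)`. -/
def dF1 (γ φ : ℝ → 𝕓) : 𝕓 := deriv (fun ε : ℝ => F1 (γ + ε • φ)) 0

/-- `d_γF²(φ)`. -/
def dF2 (γ φ : ℝ → 𝕓) : 𝕓 := deriv (fun ε : ℝ => F2 br (γ + ε • φ)) 0

/-- `d_γF³(φ)`. -/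
def dF3 (γ φ : ℝ → 𝕓) : 𝕓 := deriv (fun ε : ℝ => F3 br (γ + ε • φ)) 0

/-- The differential of the end-point map, `d_γE(φ) = (d/dε)|₀ E(γ + εφ)`. -/
def dE (γ φ : ℝ → 𝕓) : 𝕓 × 𝕓 × 𝕓 := deriv (fun ε : ℝ => Emap br (γ + ε • φ)) 0

/-- The Hessian of the end-point map, `d²_γE(φ,φ) = (d²/dε²)|₀ E(γ + εφ)`. -/
def d2E (γ φ : ℝ → 𝕓) : 𝕓 × 𝕓 × 𝕓 := iteratedDeriv 2 (fun ε : ℝ => Emap br (γ + ε • φ)) 0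

/-- The energy `L(γ) = ½∫₀¹ |γ̇|²`. -/
def energy (g : ℝ → 𝕓) : ℝ := (2:ℝ)⁻¹ * ∫ t in (0:ℝ)..1, ‖g t‖^2

/-- `γ` is a local minimizer of the energy subject to the end-point constraint. -/
def IsLocMin (V1 : Submodule ℝ 𝕓) (γ : ℝ → 𝕓) : Prop :=
  γ ∈ H1zero V1 ∧ ∃ ε > 0, ∀ h ∈ H1zero V1, Emap br h = Emap br γ →
    (∫ t in (0:ℝ)..1, ‖γ t - h t‖^2) < ε → energy γ ≤ energy h

/-- `γ` is singular: the image of `d_γE` spans a proper subspace of `𝔟 = V¹ ⊕ V² ⊕ V³`. -/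
def IsSingular (V1 V2 V3 : Submodule ℝ 𝕓) (γ : ℝ → 𝕓) : Prop :=
  Submodule.span ℝ {x : 𝕓 × 𝕓 × 𝕓 | ∃ φ ∈ H1zero V1, dE br γ φ = x}
    < V1.prod (V2.prod V3)

/-- A triple of linear functionals acting componentwise on `V¹ ⊕ V² ⊕ V³`. -/
def pairL (l1 l2 l3 : 𝕓 →ₗ[ℝ] ℝ) (x : 𝕓 × 𝕓 × 𝕓) : ℝ := l1 x.1 + l2 x.2.1 + l3 x.2.2

/-- `𝔟` is a Carnot algebra of step at most 3 with layers `V¹, V², V³` and Lie bracket `br`: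
the layers form an internal direct sum, `V² = span ⁅V¹,V¹⁆`, `V³ = span ⁅V¹,V²⁆`,
`⁅V¹,V³⁆ = 0`, and `br` is alternating and satisfies the Jacobi identity. -/
def CarnotStep3 (V1 V2 V3 : Submodule ℝ 𝕓) : Prop :=
  DirectSum.IsInternal ![V1, V2, V3] ∧
  V2 = Submodule.span ℝ {x | ∃ a ∈ V1, ∃ b ∈ V1, x = br a b} ∧
  V3 = Submodule.span ℝ {x | ∃ a ∈ V1, ∃ ξ ∈ V2, x = br a ξ} ∧
  (∀ a ∈ V1, ∀ ζ ∈ V3, br a ζ = 0) ∧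
  (∀ x, br x x = 0) ∧
  (∀ x y z, br x (br y z) + br y (br z x) + br z (br x y) = 0)

/-- The quadratic form `Q` restricted to `K` has finite Morse index: there is a uniform
bound on the dimension of subspaces contained in `K` on which `Q` is negative definite. -/
def HasFiniteMorseIndexOn (Q : (ℝ → 𝕓) → ℝ) (K : Set (ℝ → 𝕓)) : Prop :=
  ∃ N : ℕ, ∀ P : Submodule ℝ (ℝ → 𝕓), (P : Set (ℝ → 𝕓)) ⊆ K →
    (∀ φ ∈ P, φ ≠ 0 → Q φ < 0) → Module.rank ℝ P ≤ N

/-- `γ` is a normal geodesic: there are multipliers `λ², λ³` such that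
`∫₀¹ (⟨γ̇,φ̇⟩ + λ²⁅φ,γ̇⁆ + λ³⁅γ − ½γ(1), ⁅φ,γ̇⁆⁆) dt = 0` for all `φ ∈ H¹(0)` with `φ(1) = 0`. -/
def IsNormal (V1 : Submodule ℝ 𝕓) (γ : ℝ → 𝕓) : Prop :=
  ∃ l2 l3 : 𝕓 →ₗ[ℝ] ℝ,
    ∀ φ ∈ H1zero V1, curve φ 1 = 0 →
      (∫ t in (0:ℝ)..1,
        ((inner ℝ (γ t) (φ t) : ℝ) + l2 (br (curve φ t) (γ t))
          + l3 (br (curve γ t - (2:ℝ)⁻¹ • curve γ 1) (br (curve φ t) (γ t))))) = 0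

/-! Along the line `γ + εφ` the end-point map is a polynomial of degree three in `ε` whose
coefficients are integrals of multilinear expressions in `γ̇, φ̇` and their primitives, so
`d_γE(φ)` is its linear coefficient. Integration by parts (Fubini on the two triangles of
`[0,1]²`), antisymmetry and the Jacobi identity turn that coefficient into
`φ(1)`, `∫⁅φ,γ̇⁆ + ½⁅γ(1),φ(1)⁆` and
`∫⁅γ,⁅φ,γ̇⁆⁆ + ½⁅d_γF²(φ),γ(1)⁆ + ½⁅γ²(1),φ(1)⁆ − ⅓⁅γ(1),⁅φ(1),γ(1)⁆⁆`.
This system is triangular, so it vanishes exactly when `φ(1)`, `∫⁅φ,γ̇⁆` and `∫⁅γ,⁅φ,γ̇⁆⁆` do. -/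

/-- Fubini on the two triangles into which the diagonal cuts `(a, b]²`. -/
theorem ContinuousLinearMap.integral_bilinear_primitive_add {E F G : Type*}
    [NormedAddCommGroup E] [NormedSpace ℝ E] [CompleteSpace E]
    [NormedAddCommGroup F] [NormedSpace ℝ F] [CompleteSpace F]
    [NormedAddCommGroup G] [NormedSpace ℝ G] [CompleteSpace G]
    (B : E →L[ℝ] F →L[ℝ] G) {μ : Measure ℝ} [NullSingletonClass μ] [SFinite μ]
    {u : ℝ → E} {v : ℝ → F} {a b : ℝ} (hab : a ≤ b) (hu : IntervalIntegrable u μ a b)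
    (hv : IntervalIntegrable v μ a b) :
    ∫ s in a..b, (B (u s) (∫ r in a..s, v r ∂μ) + B (∫ r in a..s, u r ∂μ) (v s)) ∂μ
      = B (∫ s in a..b, u s ∂μ) (∫ s in a..b, v s ∂μ) := by
  set ρ := μ.restrict (Ioc a b)
  have hu' : IntegrableOn u (Ioc a b) μ := (intervalIntegrable_iff_integrableOn_Ioc_of_le hab).1 hu
  have hv' : IntegrableOn v (Ioc a b) μ := (intervalIntegrable_iff_integrableOn_Ioc_of_le hab).1 hv
  set f : ℝ × ℝ → G := fun p => B (u p.1) (v p.2)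
  have hf : Integrable f (ρ.prod ρ) := hu'.op_fst_snd (by fun_prop) ⟨‖B‖, B.le_opNorm₂⟩ hv'
  set S := {p : ℝ × ℝ | p.2 < p.1}
  have hS : MeasurableSet S := measurableSet_lt measurable_snd measurable_fst
  have below : ∀ s ∈ Ioc a b, B (u s) (∫ r in a..s, v r ∂μ) = ∫ r, S.indicator f (s, r) ∂ρ := by
    intro s hs
    have hIoo : Iio s ∩ Ioc a b = Ioo a s := by ext; simp; grind
    have hind : (fun r => S.indicator f (s, r)) = (Iio s).indicator fun r => B (u s) (v r) := by
      ext r; simp [S, f, Set.indicator_apply]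
    rw [hind, MeasureTheory.integral_indicator measurableSet_Iio,
      Measure.restrict_restrict measurableSet_Iio, hIoo,
      (B (u s)).integral_comp_comm (hv'.mono_set (Ioo_subset_Ioc_self.trans
        (Ioc_subset_Ioc_right hs.2))), integral_of_le hs.1.le, integral_Ioc_eq_integral_Ioo]
  have above : ∀ s ∈ Ioc a b, B (∫ r in a..s, u r ∂μ) (v s) = ∫ r, Sᶜ.indicator f (r, s) ∂ρ := by
    intro s hs
    have hIoc : Iic s ∩ Ioc a b = Ioc a s := by ext; simp; grind
    have hind :
        (fun r => Sᶜ.indicator f (r, s)) = (Iic s).indicator fun r => B.flip (v s) (u r) := by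
      ext r; simp [S, f, Set.indicator_apply]
    rw [hind, MeasureTheory.integral_indicator measurableSet_Iic,
      Measure.restrict_restrict measurableSet_Iic, hIoc,
      (B.flip (v s)).integral_comp_comm (hu'.mono_set (Ioc_subset_Ioc_right hs.2)),
      integral_of_le hs.1.le, B.flip_apply]
  have hfS : Integrable (S.indicator f) (ρ.prod ρ) := hf.indicator hS
  have hfSc : Integrable (Sᶜ.indicator f) (ρ.prod ρ) := hf.indicator hS.compl
  calc ∫ s in a..b, (B (u s) (∫ r in a..s, v r ∂μ) + B (∫ r in a..s, u r ∂μ) (v s)) ∂μ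
      = ∫ s, (∫ r, S.indicator f (s, r) ∂ρ + ∫ r, Sᶜ.indicator f (r, s) ∂ρ) ∂ρ := by
        rw [integral_of_le hab]
        exact setIntegral_congr_fun measurableSet_Ioc fun s hs => by rw [below s hs, above s hs]
    _ = ∫ p, S.indicator f p ∂(ρ.prod ρ) + ∫ p, Sᶜ.indicator f p ∂(ρ.prod ρ) := by
        rw [integral_add hfS.integral_prod_left hfSc.integral_prod_right, integral_prod _ hfS,
          integral_prod_symm _ hfSc]
    _ = ∫ p, f p ∂(ρ.prod ρ) := by
        rw [MeasureTheory.integral_indicator hS, MeasureTheory.integral_indicator hS.compl,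
          integral_add_compl hS hf]
    _ = B (∫ s in a..b, u s ∂μ) (∫ s in a..b, v s ∂μ) := by
        rw [integral_prod_bilin B hu' hv', integral_of_le hab, integral_of_le hab]

section Polynomials

variable {E : Type*} [NormedAddCommGroup E] [NormedSpace ℝ E]

theorem hasDerivAt_cubic (a b c d : E) :
    HasDerivAt (fun ε : ℝ => a + ε • b + ε ^ 2 • c + ε ^ 3 • d) b 0 :=
  ((((hasDerivAt_id (0:ℝ)).smul_const b).const_add a).add
    ((hasDerivAt_pow 2 (0:ℝ)).smul_const c) |>.add
      ((hasDerivAt_pow 3 (0:ℝ)).smul_const d)).congr_deriv (by simp)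

variable {f g : ℝ → E} {a b : ℝ} {μ : Measure ℝ}

theorem intervalIntegral.integral_add_smul (hf : IntervalIntegrable f μ a b)
    (hg : IntervalIntegrable g μ a b) (c : ℝ) :
    ∫ x in a..b, (f x + c • g x) ∂μ = (∫ x in a..b, f x ∂μ) + c • ∫ x in a..b, g x ∂μ :=
  (integral_add hf (hg.smul c)).trans (congrArg _ (integral_smul c g))

theorem intervalIntegral.integral_cubic {c₀ c₁ c₂ c₃ : ℝ → E}
    (h₀ : IntervalIntegrable c₀ μ a b) (h₁ : IntervalIntegrable c₁ μ a b)
    (h₂ : IntervalIntegrable c₂ μ a b) (h₃ : IntervalIntegrable c₃ μ a b) (ε : ℝ) :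
    ∫ t in a..b, (c₀ t + ε • c₁ t + ε ^ 2 • c₂ t + ε ^ 3 • c₃ t) ∂μ
      = (∫ t in a..b, c₀ t ∂μ) + ε • (∫ t in a..b, c₁ t ∂μ) + ε ^ 2 • (∫ t in a..b, c₂ t ∂μ)
        + ε ^ 3 • ∫ t in a..b, c₃ t ∂μ := by
  have h₀₁ : IntervalIntegrable (fun t => c₀ t + ε • c₁ t) μ a b := h₀.add (h₁.smul ε)
  have h₀₁₂ : IntervalIntegrable (fun t => c₀ t + ε • c₁ t + ε ^ 2 • c₂ t) μ a b :=
    h₀₁.add (h₂.smul _)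
  rw [integral_add_smul h₀₁₂ h₃, integral_add_smul h₀₁ h₂, integral_add_smul h₀ h₁]

end Polynomials

theorem IntervalIntegrable.continuousOn_clm_apply {E F : Type*} [NormedAddCommGroup E]
    [NormedSpace ℝ E] [NormedAddCommGroup F] [NormedSpace ℝ F] {A : ℝ → E →L[ℝ] F} {g : ℝ → E}
    {a b : ℝ} {μ : Measure ℝ} (hg : IntervalIntegrable g μ a b) (hA : ContinuousOn A (uIcc a b)) :
    IntervalIntegrable (fun t => A t (g t)) μ a b := by
  rw [intervalIntegrable_iff] at hg ⊢
  obtain ⟨C, hC⟩ := isCompact_uIcc.exists_bound_of_continuousOn hA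
  refine (hg.norm.const_mul C).mono' ((ContinuousLinearMap.apply ℝ F).aestronglyMeasurable_comp₂
    hg.1 ((hA.mono uIoc_subset_uIcc).aestronglyMeasurable measurableSet_uIoc)) ?_
  filter_upwards [ae_restrict_mem measurableSet_uIoc] with t ht
  exact (A t).le_of_opNorm_le (hC t (uIoc_subset_uIcc ht)) _

section EndPointMap

variable {a b t : ℝ} {μ : Measure ℝ} {g p q r u v γ φ X Y : ℝ → 𝕓}

-- Polar forms: `curve2 br g = curve2Polar br g g` by definition, and
-- `F3 br g = ∫ F3Polar br g g g` (`F3_eq_integral_F3Polar`).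
def curve2Polar (p q : ℝ → 𝕓) (t : ℝ) : 𝕓 := (2:ℝ)⁻¹ • ∫ s in (0:ℝ)..t, br (curve p s) (q s)

def F3Polar (p q r : ℝ → 𝕓) (t : ℝ) : 𝕓 :=
  (12:ℝ)⁻¹ • br (curve p t) (br (curve q t) (r t)) + (2:ℝ)⁻¹ • br (curve2Polar br p q t) (r t)

section Curves

omit [FiniteDimensional ℝ 𝕓]

theorem intervalIntegrable_of_mem_H1zero {V1 : Submodule ℝ 𝕓} (hg : g ∈ H1zero V1) :
    IntervalIntegrable g volume 0 1 := by
  have : IsFiniteMeasure (volume.restrict (Icc (0:ℝ) 1)) :=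
    isFiniteMeasure_restrict.2 measure_Icc_lt_top.ne
  exact (intervalIntegrable_iff_integrableOn_Icc_of_le zero_le_one).2 (hg.2.integrable one_le_two)

theorem continuousOn_curve (hg : IntervalIntegrable g volume 0 1) :
    ContinuousOn (curve g) (uIcc 0 1) :=
  continuousOn_primitive_interval' hg left_mem_uIcc

theorem curve_add_smul (hγ : IntervalIntegrable γ volume 0 1)
    (hφ : IntervalIntegrable φ volume 0 1) (ε : ℝ) (ht : t ∈ uIcc 0 1) :
    curve (γ + ε • φ) t = curve γ t + ε • curve φ t :=
  have hsub := uIcc_subset_uIcc left_mem_uIcc ht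
  integral_add_smul (hγ.mono_set hsub) (hφ.mono_set hsub) ε

theorem hasDerivAt_F1 (hγ : IntervalIntegrable γ volume 0 1)
    (hφ : IntervalIntegrable φ volume 0 1) :
    HasDerivAt (fun ε : ℝ => F1 (γ + ε • φ)) (curve φ 1) 0 := by
  simpa [F1, curve_add_smul hγ hφ _ right_mem_uIcc] using
    hasDerivAt_cubic (curve γ 1) (curve φ 1) 0 0

theorem curve_half_bracket_eq_curve2Polar :
    curve (fun s => (2:ℝ)⁻¹ • br (curve p s) (q s)) = curve2Polar br p q :=
  funext fun _ => integral_smul _ _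

theorem F3_eq_integral_F3Polar (g : ℝ → 𝕓) : F3 br g = ∫ t in (0:ℝ)..1, F3Polar br g g g t := by
  refine integral_congr fun t _ => ?_
  simp only [F3Polar, curve2Polar, curve2, map_smul]
  module

end Curves

def bracketCLM : 𝕓 →L[ℝ] 𝕓 →L[ℝ] 𝕓 :=
  LinearMap.toContinuousLinearMap (LinearMap.toContinuousLinearMap.toLinearMap ∘ₗ br)

theorem IntervalIntegrable.continuousOn_bracket (hg : IntervalIntegrable g μ a b)
    (hX : ContinuousOn X (uIcc a b)) : IntervalIntegrable (fun t => br (X t) (g t)) μ a b :=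
  hg.continuousOn_clm_apply ((bracketCLM br).continuous.comp_continuousOn hX)

theorem IntervalIntegrable.bracket_continuousOn (hg : IntervalIntegrable g μ a b)
    (hX : ContinuousOn X (uIcc a b)) : IntervalIntegrable (fun t => br (g t) (X t)) μ a b :=
  hg.continuousOn_clm_apply ((bracketCLM br).flip.continuous.comp_continuousOn hX)

theorem IntervalIntegrable.continuousOn_bracket_bracket (hg : IntervalIntegrable g μ a b)
    (hX : ContinuousOn X (uIcc a b)) (hY : ContinuousOn Y (uIcc a b)) :
    IntervalIntegrable (fun t => br (X t) (br (Y t) (g t))) μ a b :=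
  hg.continuousOn_clm_apply (A := fun t => (bracketCLM br (X t)).comp (bracketCLM br (Y t)))
    (((bracketCLM br).continuous.comp_continuousOn hX).clm_comp
      ((bracketCLM br).continuous.comp_continuousOn hY))

theorem integral_bracket_curve_add (hu : IntervalIntegrable u volume 0 1)
    (hv : IntervalIntegrable v volume 0 1) (ht : t ∈ uIcc 0 1) :
    ∫ s in (0:ℝ)..t, (br (u s) (curve v s) + br (curve u s) (v s)) = br (curve u t) (curve v t) :=
  have hsub := uIcc_subset_uIcc left_mem_uIcc ht
  (bracketCLM br).integral_bilinear_primitive_add (by simpa using ht.1) (hu.mono_set hsub)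
    (hv.mono_set hsub)

section Integrability

variable (hp : IntervalIntegrable p volume 0 1) (hq : IntervalIntegrable q volume 0 1)
  (hr : IntervalIntegrable r volume 0 1)
include hp hq

theorem IntervalIntegrable.curve_bracket :
    IntervalIntegrable (fun s => br (curve p s) (q s)) volume 0 1 :=
  hq.continuousOn_bracket br (continuousOn_curve hp)

theorem IntervalIntegrable.bracket_curve_add :
    IntervalIntegrable (fun s => br (p s) (curve q s) + br (curve p s) (q s)) volume 0 1 :=
  (hp.bracket_continuousOn br (continuousOn_curve hq)).add (hp.curve_bracket br hq)

theorem continuousOn_curve2Polar : ContinuousOn (curve2Polar br p q) (uIcc 0 1) :=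
  (continuousOn_primitive_interval' (hp.curve_bracket br hq) left_mem_uIcc).const_smul _

include hr in
theorem intervalIntegrable_F3Polar : IntervalIntegrable (F3Polar br p q r) volume 0 1 :=
  ((hr.continuousOn_bracket_bracket br (continuousOn_curve hp) (continuousOn_curve hq)).smul _).add
    ((hr.continuousOn_bracket br (continuousOn_curve2Polar br hp hq)).smul _)

end Integrability

theorem curve2Polar_add_smul_left (hp : IntervalIntegrable p volume 0 1)
    (hφ : IntervalIntegrable φ volume 0 1) (hq : IntervalIntegrable q volume 0 1) (ε : ℝ)
    (ht : t ∈ uIcc 0 1) :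
    curve2Polar br (p + ε • φ) q t = curve2Polar br p q t + ε • curve2Polar br φ q t := by
  have hsub := uIcc_subset_uIcc left_mem_uIcc ht
  have hexp : ∀ s ∈ uIcc 0 t,
      br (curve (p + ε • φ) s) (q s) = br (curve p s) (q s) + ε • br (curve φ s) (q s) :=
    fun s hs => by rw [curve_add_smul hp hφ ε (hsub hs), map_add, map_smul, LinearMap.add_apply,
      LinearMap.smul_apply]
  rw [curve2Polar, integral_congr hexp, integral_add_smul ((hp.curve_bracket br hq).mono_set hsub)
    ((hφ.curve_bracket br hq).mono_set hsub), smul_add, smul_comm, curve2Polar, curve2Polar]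

theorem curve2Polar_add_smul_right (hp : IntervalIntegrable p volume 0 1)
    (hq : IntervalIntegrable q volume 0 1) (hφ : IntervalIntegrable φ volume 0 1) (ε : ℝ)
    (ht : t ∈ uIcc 0 1) :
    curve2Polar br p (q + ε • φ) t = curve2Polar br p q t + ε • curve2Polar br p φ t := by
  have hsub := uIcc_subset_uIcc left_mem_uIcc ht
  simp only [curve2Polar, Pi.add_apply, Pi.smul_apply, map_add, map_smul]
  rw [integral_add_smul ((hp.curve_bracket br hq).mono_set hsub)
    ((hp.curve_bracket br hφ).mono_set hsub), smul_add, smul_comm]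

section Expansions

variable (hγ : IntervalIntegrable γ volume 0 1) (hφ : IntervalIntegrable φ volume 0 1)
include hγ hφ

theorem curve2Polar_add_smul (ε : ℝ) (ht : t ∈ uIcc 0 1) :
    curve2Polar br (γ + ε • φ) (γ + ε • φ) t = curve2Polar br γ γ t
      + ε • (curve2Polar br φ γ t + curve2Polar br γ φ t) + ε ^ 2 • curve2Polar br φ φ t := by
  have hg : IntervalIntegrable (γ + ε • φ) volume 0 1 := hγ.add (hφ.smul ε)
  rw [curve2Polar_add_smul_left br hγ hφ hg ε ht,
    curve2Polar_add_smul_right br hγ hγ hφ ε ht, curve2Polar_add_smul_right br hφ hγ hφ ε ht]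
  module

theorem F3Polar_add_smul (ε : ℝ) (ht : t ∈ uIcc 0 1) :
    F3Polar br (γ + ε • φ) (γ + ε • φ) (γ + ε • φ) t = F3Polar br γ γ γ t
      + ε • (F3Polar br φ γ γ t + F3Polar br γ φ γ t + F3Polar br γ γ φ t)
      + ε ^ 2 • (F3Polar br φ φ γ t + F3Polar br φ γ φ t + F3Polar br γ φ φ t)
      + ε ^ 3 • F3Polar br φ φ φ t := by
  simp only [F3Polar, curve_add_smul hγ hφ ε ht, curve2Polar_add_smul br hγ hφ ε ht,
    Pi.add_apply, Pi.smul_apply, map_add, map_smul, LinearMap.add_apply, LinearMap.smul_apply]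
  module

theorem hasDerivAt_F2 : HasDerivAt (fun ε : ℝ => F2 br (γ + ε • φ))
    (curve2Polar br φ γ 1 + curve2Polar br γ φ 1) 0 := by
  have hexp (ε : ℝ) : F2 br (γ + ε • φ) = _ := curve2Polar_add_smul br hγ hφ ε right_mem_uIcc
  simpa only [hexp, smul_zero, add_zero] using hasDerivAt_cubic (curve2Polar br γ γ 1)
    (curve2Polar br φ γ 1 + curve2Polar br γ φ 1) (curve2Polar br φ φ 1) 0

theorem hasDerivAt_F3 : HasDerivAt (fun ε : ℝ => F3 br (γ + ε • φ))
    (∫ t in (0:ℝ)..1, (F3Polar br φ γ γ t + F3Polar br γ φ γ t + F3Polar br γ γ φ t)) 0 := by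
  have hK {p q r : ℝ → 𝕓} := @intervalIntegrable_F3Polar _ _ _ _ br p q r
  have hexp : ∀ ε : ℝ, F3 br (γ + ε • φ) = F3 br γ
      + ε • (∫ t in (0:ℝ)..1, (F3Polar br φ γ γ t + F3Polar br γ φ γ t + F3Polar br γ γ φ t))
      + ε ^ 2 • (∫ t in (0:ℝ)..1, (F3Polar br φ φ γ t + F3Polar br φ γ φ t + F3Polar br γ φ φ t))
      + ε ^ 3 • F3 br φ := by
    intro ε
    rw [F3_eq_integral_F3Polar, F3_eq_integral_F3Polar, F3_eq_integral_F3Polar,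
      ← integral_cubic (hK hγ hγ hγ) (((hK hφ hγ hγ).add (hK hγ hφ hγ)).add (hK hγ hγ hφ))
        (((hK hφ hφ hγ).add (hK hφ hγ hφ)).add (hK hγ hφ hφ)) (hK hφ hφ hφ)]
    exact integral_congr fun t ht => F3Polar_add_smul br hγ hφ ε ht
  simpa only [hexp] using hasDerivAt_cubic _ _ _ _

theorem dE_eq : dE br γ φ = (curve φ 1, curve2Polar br φ γ 1 + curve2Polar br γ φ 1,
    ∫ t in (0:ℝ)..1, (F3Polar br φ γ γ t + F3Polar br γ φ γ t + F3Polar br γ γ φ t)) :=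
  ((hasDerivAt_F1 hγ hφ).prodMk ((hasDerivAt_F2 br hγ hφ).prodMk (hasDerivAt_F3 br hγ hφ))).deriv

end Expansions

-- the derivative of `s ↦ ⁅curve2Polar br p q s, curve v s⁆`
def curve2PolarBracketDeriv (p q v : ℝ → 𝕓) (s : ℝ) : 𝕓 :=
  br ((2:ℝ)⁻¹ • br (curve p s) (q s)) (curve v s) + br (curve2Polar br p q s) (v s)

theorem intervalIntegrable_curve2PolarBracketDeriv (hp : IntervalIntegrable p volume 0 1)
    (hq : IntervalIntegrable q volume 0 1) (hv : IntervalIntegrable v volume 0 1) :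
    IntervalIntegrable (curve2PolarBracketDeriv br p q v) volume 0 1 :=
  (((hp.curve_bracket br hq).smul _).bracket_continuousOn br (continuousOn_curve hv)).add
    (hv.continuousOn_bracket br (continuousOn_curve2Polar br hp hq))

theorem integral_curve2PolarBracketDeriv (hp : IntervalIntegrable p volume 0 1)
    (hq : IntervalIntegrable q volume 0 1) (hv : IntervalIntegrable v volume 0 1) :
    ∫ s in (0:ℝ)..1, curve2PolarBracketDeriv br p q v s
      = br (curve2Polar br p q 1) (curve v 1) := by
  have := integral_bracket_curve_add br (u := fun s => (2:ℝ)⁻¹ • br (curve p s) (q s))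
    ((hp.curve_bracket br hq).smul _) hv right_mem_uIcc
  rwa [curve_half_bracket_eq_curve2Polar] at this

section BracketIdentities

variable (halt : br.IsAlt) (hγ : IntervalIntegrable γ volume 0 1)
  (hφ : IntervalIntegrable φ volume 0 1)
include halt hγ hφ

theorem curve2Polar_add_curve2Polar_swap : curve2Polar br φ γ 1 + curve2Polar br γ φ 1
    = (∫ t in (0:ℝ)..1, br (curve φ t) (γ t)) + (2:ℝ)⁻¹ • br (curve γ 1) (curve φ 1) := by
  have hparts := integral_bracket_curve_add br hγ hφ right_mem_uIcc
  rw [intervalIntegral.integral_add (hγ.bracket_continuousOn br (continuousOn_curve hφ))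
    (hγ.curve_bracket br hφ)] at hparts
  have hanti : ∫ t in (0:ℝ)..1, br (γ t) (curve φ t) = -∫ t in (0:ℝ)..1, br (curve φ t) (γ t) := by
    rw [← intervalIntegral.integral_neg]
    exact integral_congr fun t _ => (halt.neg _ _).symm
  simp only [curve2Polar]
  linear_combination (norm := module) (2:ℝ)⁻¹ • hparts - (2:ℝ)⁻¹ • hanti

theorem integral_F3Polar_linear
    (hjac : ∀ x y z, br x (br y z) + br y (br z x) + br z (br x y) = 0) :
    ∫ t in (0:ℝ)..1, (F3Polar br φ γ γ t + F3Polar br γ φ γ t + F3Polar br γ γ φ t)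
      = (∫ t in (0:ℝ)..1, br (curve γ t) (br (curve φ t) (γ t)))
        + (2:ℝ)⁻¹ • br (curve2Polar br φ γ 1 + curve2Polar br γ φ 1) (curve γ 1)
        + (2:ℝ)⁻¹ • br (curve2Polar br γ γ 1) (curve φ 1)
        - (3:ℝ)⁻¹ • br (curve γ 1) (br (curve φ 1) (curve γ 1)) := by
  set w : ℝ → 𝕓 := fun s => br (φ s) (curve γ s) + br (curve φ s) (γ s)
  have hw : ∀ t ∈ uIcc 0 1, curve w t = br (curve φ t) (curve γ t) :=
    fun _ => integral_bracket_curve_add br hφ hγ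
  -- By antisymmetry and the Jacobi identity at `(γ̇, φ, γ)`, the integrand is `⁅γ, ⁅φ, γ̇⁆⁆`
  -- plus a combination of derivatives of `⁅d_γγ²(φ), γ⁆`, `⁅γ², φ⁆` and `⁅γ, ⁅φ, γ⁆⁆`.
  have hpt : ∀ t ∈ uIcc 0 1, F3Polar br φ γ γ t + F3Polar br γ φ γ t + F3Polar br γ γ φ t
      = br (curve γ t) (br (curve φ t) (γ t))
        + (2:ℝ)⁻¹ • (curve2PolarBracketDeriv br φ γ γ t + curve2PolarBracketDeriv br γ φ γ t
          + curve2PolarBracketDeriv br γ γ φ t)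
        - (3:ℝ)⁻¹ • (br (γ t) (curve w t) + br (curve γ t) (w t)) := by
    intro t ht
    rw [hw t ht]
    simp only [F3Polar, curve2PolarBracketDeriv, w, map_add, map_smul, LinearMap.smul_apply]
    set X := curve γ t
    set Y := curve φ t
    have f₁ := (halt.neg X (br Y (γ t))).symm
    have f₂ := (halt.neg X (br X (φ t))).symm
    have f₃ := (halt.neg Y (br X (γ t))).symm
    have f₄ : br X (br (φ t) X) = -br X (br X (φ t)) := by rw [← halt.neg X, map_neg]
    have f₅ : br X (br (γ t) Y) = -br X (br Y (γ t)) := by rw [← halt.neg Y, map_neg]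
    linear_combination (norm := module)
      (-(4:ℝ)⁻¹) • (f₁ + f₂ + f₃) + (3:ℝ)⁻¹ • (f₄ - f₅ + hjac (γ t) Y X)
  have hT := hγ.continuousOn_bracket_bracket br (continuousOn_curve hγ) (continuousOn_curve hφ)
  have hd₁ := intervalIntegrable_curve2PolarBracketDeriv br hφ hγ hγ
  have hd₂ := intervalIntegrable_curve2PolarBracketDeriv br hγ hφ hγ
  have hd₃ := intervalIntegrable_curve2PolarBracketDeriv br hγ hγ hφ
  have hwi := hφ.bracket_curve_add br hγ
  have hd₄ := hγ.bracket_curve_add br hwi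
  rw [integral_congr hpt, intervalIntegral.integral_sub, intervalIntegral.integral_add,
    intervalIntegral.integral_smul, intervalIntegral.integral_smul, intervalIntegral.integral_add,
    intervalIntegral.integral_add, integral_curve2PolarBracketDeriv br hφ hγ hγ,
    integral_curve2PolarBracketDeriv br hγ hφ hγ, integral_curve2PolarBracketDeriv br hγ hγ hφ,
    integral_bracket_curve_add br hγ hwi right_mem_uIcc,
    hw 1 right_mem_uIcc, map_add, LinearMap.add_apply]
  · module
  exacts [hd₁, hd₂, hd₁.add hd₂, hd₃, hT, ((hd₁.add hd₂).add hd₃).smul _,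
    hT.add (((hd₁.add hd₂).add hd₃).smul _), hd₄.smul _]

end BracketIdentities

end EndPointMap

/-- characterization of the kernel of the differential of the
end-point map. -/
theorem statement11 (V1 V2 V3 : Submodule ℝ 𝕓) (hC : CarnotStep3 br V1 V2 V3)
    (γ : ℝ → 𝕓) (hγ : γ ∈ H1zero V1) (φ : ℝ → 𝕓) (hφ : φ ∈ H1zero V1) :
    dE br γ φ = 0 ↔
      (curve φ 1 = 0 ∧ (∫ t in (0:ℝ)..1, br (curve φ t) (γ t)) = 0 ∧
        (∫ t in (0:ℝ)..1, br (curve γ t) (br (curve φ t) (γ t))) = 0) := by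
  obtain ⟨-, -, -, -, halt, hjac⟩ := hC
  have hγi := intervalIntegrable_of_mem_H1zero hγ
  have hφi := intervalIntegrable_of_mem_H1zero hφ
  rw [dE_eq br hγi hφi, integral_F3Polar_linear br halt hγi hφi hjac,
    curve2Polar_add_curve2Polar_swap br halt hγi hφi, Prod.mk_eq_zero, Prod.mk_eq_zero]
  constructor
  · rintro ⟨h₁, h₂, h₃⟩
    rw [h₁, map_zero, smul_zero, add_zero] at h₂
    exact ⟨h₁, h₂, by simpa [h₁, h₂] using h₃⟩
  · rintro ⟨h₁, h₂, h₃⟩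
    simp [h₁, h₂, h₃]
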